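/- Let E ⊆ B be a set of elements, each admitting a (2,0,2/5)-decomposition, and assume that for every e ∈ E the involution σ_e is an algebra automorphism of B preserving the bilinear form (i.e. σ_e(x·y) = σ_e(x)·σ_e(y) and (σ_e x|σ_e y) = (x|y) for all x,y ∈ B). Then for all e, f ∈ E the composite σ_e ∘ σ_f has order at most 3; more precisely, either (σ_e σ_f)² = id_B or (σ_e σ_f)³ = id_B. Thus the σ-involutions associated to E generate a 3-transposition group. -/

import Mathlib

/-!
An automorphism `g` of `B` maps the eigenspaces of `x ↦ e·x` onto those of `x ↦ (g e)·x`, and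
`σ_e` is determined by being `+1` on `B_e(2) ⊕ B_e(0)` and `-1` on `B_e(2/5)`; hence
`σ_e σ_f σ_e` is the σ-map of `σ_e f`. Comparing `B_e(2/5)`-components of `f·f = 2f` and of
`f·(f·e) = (2/5) f·e + 8 (e|f) f` shows that either `f` has no `B_e(2/5)`-component, so
`σ_e f = f`, or `(e|f) = 1/25`, and then `σ_e x = x + 25 (e|x) e - 5 e·x` gives
`σ_e f = σ_f e`. So `σ_e σ_f σ_e = σ_f` or `σ_e σ_f σ_e = σ_f σ_e σ_f`.
-/

/-- A commutative (not necessarily associative) real algebra with a symmetric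
invariant bilinear form, modelling the Griess algebra of an OZ-type VOA. -/
structure GriessAlg (B : Type*) [AddCommGroup B] [Module ℝ B] where
  mul : B →ₗ[ℝ] B →ₗ[ℝ] B
  bf : B →ₗ[ℝ] B →ₗ[ℝ] ℝ
  comm : ∀ x y, mul x y = mul y x
  symm : ∀ x y, bf x y = bf y x
  invariant : ∀ x y z, bf (mul x y) z = bf x (mul y z)

/-- A `(2,0,2/5)`-decomposition for `e`: `B` is the internal direct sum of the
eigenspaces of `x ↦ e·x` for eigenvalues `2`, `0`, `2/5` (with projections
`pi2`, `pi0`, `piq`), the `2`-eigenspace is `ℝ e`, `e·e = 2e`, `(e|e) = 2/5`,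
and the fusion rules hold. -/
structure Decomp {B : Type*} [AddCommGroup B] [Module ℝ B] (G : GriessAlg B) (e : B) where
  pi2 : B →ₗ[ℝ] B
  pi0 : B →ₗ[ℝ] B
  piq : B →ₗ[ℝ] B
  sum_eq : ∀ x, pi2 x + pi0 x + piq x = x
  eig2 : ∀ x, G.mul e (pi2 x) = (2 : ℝ) • pi2 x
  eig0 : ∀ x, G.mul e (pi0 x) = 0
  eigq : ∀ x, G.mul e (piq x) = (2/5 : ℝ) • piq x
  proj2 : ∀ x, G.mul e x = (2 : ℝ) • x → pi2 x = x
  proj0 : ∀ x, G.mul e x = 0 → pi0 x = x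
  projq : ∀ x, G.mul e x = (2/5 : ℝ) • x → piq x = x
  span2 : ∀ x, ∃ c : ℝ, pi2 x = c • e
  mul_ee : G.mul e e = (2 : ℝ) • e
  bf_ee : G.bf e e = 2/5
  fusion00 : ∀ x y, G.mul e x = 0 → G.mul e y = 0 → piq (G.mul x y) = 0
  fusion0q : ∀ x y, G.mul e x = 0 → G.mul e y = (2/5 : ℝ) • y →
    G.mul e (G.mul x y) = (2/5 : ℝ) • G.mul x y
  fusionqq : ∀ x y, G.mul e x = (2/5 : ℝ) • x → G.mul e y = (2/5 : ℝ) • y →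
    piq (G.mul x y) = 0

/-- The σ-involution attached to a `(2,0,2/5)`-decomposition: `+1` on
`B_e(2) ⊕ B_e(0)` and `-1` on `B_e(2/5)`. -/
def Decomp.sigma {B : Type*} [AddCommGroup B] [Module ℝ B] {G : GriessAlg B} {e : B}
    (D : Decomp G e) : B →ₗ[ℝ] B :=
  D.pi2 + D.pi0 - D.piq

open Module.End

theorem mul_mul_self_eq_one_of_mul_mul_eq {M : Type*} [Monoid M] {s t : M}
    (ht : t * t = 1) (h : s * t * s = t) : s * t * (s * t) = 1 := by
  rw [← mul_assoc, h, ht]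

theorem mul_mul_self_mul_eq_one_of_braid {M : Type*} [Monoid M] {s t : M}
    (hs : s * s = 1) (ht : t * t = 1) (h : s * t * s = t * s * t) :
    s * t * (s * t) * (s * t) = 1 := by
  calc s * t * (s * t) * (s * t) = (s * t * s) * (t * s * t) := by simp only [mul_assoc]
    _ = (t * s * t) * (t * s * t) := by rw [h]
    _ = 1 := by simp only [mul_assoc, ← mul_assoc t t, ht, one_mul, ← mul_assoc s s, hs]

namespace GriessAlg

variable {B : Type*} [AddCommGroup B] [Module ℝ B] (G : GriessAlg B)

structure IsSigma (a : B) (τ : Module.End ℝ B) : Prop where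
  apply_of_mem_two : ∀ x ∈ eigenspace (G.mul a) 2, τ x = x
  apply_of_mem_zero : ∀ x ∈ eigenspace (G.mul a) 0, τ x = x
  apply_of_mem_two_fifths : ∀ x ∈ eigenspace (G.mul a) (2 / 5), τ x = -x
  sup_eigenspace_eq_top :
    eigenspace (G.mul a) 2 ⊔ eigenspace (G.mul a) 0 ⊔ eigenspace (G.mul a) (2 / 5) = ⊤

variable {G}

theorem IsSigma.eq_of_eqOn {a : B} {τ : Module.End ℝ B} (h : G.IsSigma a τ)
    {φ ψ : Module.End ℝ B} (h2 : Set.EqOn φ ψ (eigenspace (G.mul a) 2))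
    (h0 : Set.EqOn φ ψ (eigenspace (G.mul a) 0))
    (hq : Set.EqOn φ ψ (eigenspace (G.mul a) (2 / 5))) : φ = ψ :=
  LinearMap.ext_on_codisjoint (codisjoint_iff.2 h.sup_eigenspace_eq_top)
    (LinearMap.eqOn_sup h2 h0) hq

theorem IsSigma.unique {a : B} {τ₁ τ₂ : Module.End ℝ B} (h₁ : G.IsSigma a τ₁)
    (h₂ : G.IsSigma a τ₂) : τ₁ = τ₂ :=
  h₁.eq_of_eqOn
    (fun x hx => (h₁.apply_of_mem_two x hx).trans (h₂.apply_of_mem_two x hx).symm)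
    (fun x hx => (h₁.apply_of_mem_zero x hx).trans (h₂.apply_of_mem_zero x hx).symm)
    (fun x hx => (h₁.apply_of_mem_two_fifths x hx).trans
      (h₂.apply_of_mem_two_fifths x hx).symm)

theorem IsSigma.mul_self {a : B} {τ : Module.End ℝ B} (h : G.IsSigma a τ) : τ * τ = 1 :=
  h.eq_of_eqOn
    (fun x hx => by simp [h.apply_of_mem_two x hx])
    (fun x hx => by simp [h.apply_of_mem_zero x hx])
    (fun x hx => by simp [h.apply_of_mem_two_fifths x hx])

theorem eigenspace_mul_apply_eq_map {g : B ≃ₗ[ℝ] B}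
    (hg : ∀ x y, g (G.mul x y) = G.mul (g x) (g y)) (a : B) (μ : ℝ) :
    eigenspace (G.mul (g a)) μ = (eigenspace (G.mul a) μ).map (g : B →ₗ[ℝ] B) := by
  ext x
  rw [Submodule.mem_map_equiv, mem_eigenspace_iff, mem_eigenspace_iff,
    ← g.apply_symm_apply x, ← hg, g.symm_apply_apply, ← map_smul, g.injective.eq_iff]

theorem IsSigma.conj {a : B} {τ : Module.End ℝ B} (h : G.IsSigma a τ) (g : B ≃ₗ[ℝ] B)
    (hg : ∀ x y, g (G.mul x y) = G.mul (g x) (g y)) : G.IsSigma (g a) (g.conj τ) where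
  apply_of_mem_two x hx := by
    rw [eigenspace_mul_apply_eq_map hg, Submodule.mem_map_equiv] at hx
    rw [LinearEquiv.conj_apply_apply, h.apply_of_mem_two _ hx, g.apply_symm_apply]
  apply_of_mem_zero x hx := by
    rw [eigenspace_mul_apply_eq_map hg, Submodule.mem_map_equiv] at hx
    rw [LinearEquiv.conj_apply_apply, h.apply_of_mem_zero _ hx, g.apply_symm_apply]
  apply_of_mem_two_fifths x hx := by
    rw [eigenspace_mul_apply_eq_map hg, Submodule.mem_map_equiv] at hx
    rw [LinearEquiv.conj_apply_apply, h.apply_of_mem_two_fifths _ hx, map_neg,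
      g.apply_symm_apply]
  sup_eigenspace_eq_top := by
    simp only [eigenspace_mul_apply_eq_map hg, ← Submodule.map_sup, h.sup_eigenspace_eq_top,
      Submodule.map_top, LinearEquiv.range]

theorem IsSigma.mul_mul {e a : B} {σ τ : Module.End ℝ B} (hσ : G.IsSigma e σ)
    (hσ_mul : ∀ x y, σ (G.mul x y) = G.mul (σ x) (σ y)) (hτ : G.IsSigma a τ) :
    G.IsSigma (σ a) (σ * τ * σ) :=
  hτ.conj (LinearEquiv.ofInvolutive σ fun x => LinearMap.congr_fun hσ.mul_self x) hσ_mul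

theorem bf_eq_zero_of_mul_eq_smul {e y : B} {c : ℝ} (he : G.mul e e = (2 : ℝ) • e)
    (hc : c ≠ 2) (hy : G.mul e y = c • y) : G.bf e y = 0 := by
  have h := G.invariant e e y
  rw [he, hy, map_smul, map_smul, LinearMap.smul_apply, smul_eq_mul, smul_eq_mul] at h
  exact (mul_eq_zero.1 (by linarith : (2 - c) * G.bf e y = 0)).resolve_left
    (sub_ne_zero.2 hc.symm)

end GriessAlg

namespace Decomp

variable {B : Type*} [AddCommGroup B] [Module ℝ B] {G : GriessAlg B} {e : B}
  (D : Decomp G e)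

theorem sigma_apply (x : B) : D.sigma x = x - (2 : ℝ) • D.piq x := by
  simp only [Decomp.sigma, LinearMap.sub_apply, LinearMap.add_apply]
  linear_combination (norm := module) D.sum_eq x

theorem piq_piq (x : B) : D.piq (D.piq x) = D.piq x := D.projq _ (D.eigq x)

theorem piq_eq_zero_of_mul_eq_two_smul {x : B} (hx : G.mul e x = (2 : ℝ) • x) :
    D.piq x = 0 := by
  have hsum : D.pi0 x + D.piq x = 0 := by
    linear_combination (norm := module) D.sum_eq x - D.proj2 x hx
  have h := congrArg (G.mul e) hsum
  rw [map_add, D.eig0, D.eigq, map_zero, zero_add] at h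
  exact (smul_eq_zero.1 h).resolve_left (by norm_num)

theorem piq_eq_zero_of_mul_eq_zero {x : B} (hx : G.mul e x = 0) : D.piq x = 0 := by
  have hsum : D.pi2 x + D.piq x = 0 := by
    linear_combination (norm := module) D.sum_eq x - D.proj0 x hx
  have h := congrArg (G.mul e) hsum
  rw [map_add, D.eig2, D.eigq, map_zero, eq_neg_of_add_eq_zero_left hsum] at h
  have h' : (-(8 / 5) : ℝ) • D.piq x = 0 := by linear_combination (norm := module) h
  exact (smul_eq_zero.1 h').resolve_left (by norm_num)

theorem isSigma : G.IsSigma e D.sigma where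
  apply_of_mem_two x hx := by
    rw [D.sigma_apply, D.piq_eq_zero_of_mul_eq_two_smul (mem_eigenspace_iff.1 hx), smul_zero,
      sub_zero]
  apply_of_mem_zero x hx := by
    rw [mem_eigenspace_iff, zero_smul] at hx
    rw [D.sigma_apply, D.piq_eq_zero_of_mul_eq_zero hx, smul_zero, sub_zero]
  apply_of_mem_two_fifths x hx := by
    rw [D.sigma_apply, D.projq x (mem_eigenspace_iff.1 hx)]
    module
  sup_eigenspace_eq_top := by
    refine eq_top_iff.2 fun x _ => D.sum_eq x ▸ Submodule.add_mem_sup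
      (Submodule.add_mem_sup ?_ ?_) ?_
    · exact mem_eigenspace_iff.2 (D.eig2 x)
    · exact mem_eigenspace_iff.2 (by rw [D.eig0, zero_smul])
    · exact mem_eigenspace_iff.2 (D.eigq x)

theorem pi2_eq (x : B) : D.pi2 x = ((5 / 2) * G.bf e x) • e := by
  obtain ⟨c, hc⟩ := D.span2 x
  have h := congrArg (G.bf e) (D.sum_eq x)
  rw [map_add, map_add, hc, map_smul,
    G.bf_eq_zero_of_mul_eq_smul D.mul_ee (by norm_num) ((D.eig0 x).trans (zero_smul ℝ _).symm),
    G.bf_eq_zero_of_mul_eq_smul D.mul_ee (by norm_num) (D.eigq x), D.bf_ee,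
    smul_eq_mul, add_zero, add_zero] at h
  rw [hc, ← h]
  ring_nf

theorem add_pi0_add_piq (x : B) :
    ((5 / 2) * G.bf e x) • e + D.pi0 x + D.piq x = x := by
  rw [← D.pi2_eq]; exact D.sum_eq x

theorem mul_apply (x : B) : G.mul e x = (5 * G.bf e x) • e + (2 / 5 : ℝ) • D.piq x := by
  conv_lhs => rw [← D.add_pi0_add_piq x]
  rw [map_add, map_add, map_smul, D.mul_ee, D.eig0, D.eigq]
  module

theorem piq_self : D.piq e = 0 := D.piq_eq_zero_of_mul_eq_two_smul D.mul_ee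

theorem piq_mul (x : B) : D.piq (G.mul e x) = (2 / 5 : ℝ) • D.piq x := by
  rw [D.mul_apply, map_add, map_smul, map_smul, D.piq_self, D.piq_piq, smul_zero, zero_add]

theorem mul_mul (D : Decomp G e) (x : B) :
    G.mul e (G.mul e x) = (2 / 5 : ℝ) • G.mul e x + (8 * G.bf e x) • e := by
  rw [D.mul_apply x, map_add, map_smul, map_smul, D.mul_ee, D.eigq]
  module

theorem sigma_apply_eq_add_sub_mul (x : B) :
    D.sigma x = x + (25 * G.bf e x) • e - (5 : ℝ) • G.mul e x := by
  rw [D.sigma_apply, D.mul_apply]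
  module

section pair

variable {f : B}

theorem mul_pi0_piq (hf : G.mul f f = (2 : ℝ) • f) :
    G.mul (D.pi0 f) (D.piq f) = (1 - G.bf e f) • D.piq f := by
  have h := hf
  rw [← D.add_pi0_add_piq f] at h
  simp only [map_add, LinearMap.add_apply, map_smul, LinearMap.smul_apply] at h
  rw [G.comm (D.pi0 f) e, G.comm (D.piq f) e, G.comm (D.piq f) (D.pi0 f), D.mul_ee, D.eig0,
    D.eigq] at h
  replace h := congrArg D.piq h
  simp only [map_add, map_smul, map_zero, smul_zero] at h
  rw [D.piq_self, D.fusion00 _ _ (D.eig0 f) (D.eig0 f),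
    D.projq _ (D.fusion0q _ _ (D.eig0 f) (D.eigq f)), D.fusionqq _ _ (D.eigq f) (D.eigq f),
    D.piq_piq, D.piq_eq_zero_of_mul_eq_zero (D.eig0 f)] at h
  have h2 : (2 : ℝ) • G.mul (D.pi0 f) (D.piq f) = (2 : ℝ) • ((1 - G.bf e f) • D.piq f) := by
    linear_combination (norm := module) h
  exact smul_right_injective B (by norm_num : (2 : ℝ) ≠ 0) h2

theorem piq_mul_piq (hf : G.mul f f = (2 : ℝ) • f) :
    D.piq (G.mul f (D.piq f)) = D.piq f := by
  have h : G.mul f (D.piq f) = G.mul ((5 / 2 * G.bf e f) • e + D.pi0 f + D.piq f) (D.piq f) := by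
    rw [D.add_pi0_add_piq]
  rw [h, map_add, map_add, LinearMap.add_apply, LinearMap.add_apply, map_smul,
    LinearMap.smul_apply, D.eigq, D.mul_pi0_piq hf, map_add, map_add, map_smul, map_smul,
    map_smul, D.piq_piq, D.fusionqq _ _ (D.eigq f) (D.eigq f)]
  module

theorem bf_eq_of_piq_ne_zero (Df : Decomp G f) (hq : D.piq f ≠ 0) : G.bf e f = 1 / 25 := by
  have hfe : G.mul f e = G.mul e f := G.comm f e
  have hL : D.piq (G.mul f (G.mul f e)) = (2 * G.bf e f + 2 / 5) • D.piq f := by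
    rw [hfe, D.mul_apply f, map_add, map_smul, map_smul, map_add, map_smul, map_smul, hfe,
      D.piq_mul, D.piq_mul_piq Df.mul_ee]
    module
  have hR : D.piq (G.mul f (G.mul f e)) = (4 / 25 + 8 * G.bf e f) • D.piq f := by
    rw [Df.mul_mul, G.symm f e, map_add, map_smul, map_smul, hfe, D.piq_mul]
    module
  have h : (6 * G.bf e f - 6 / 25) • D.piq f = 0 := by
    linear_combination (norm := module) hL - hR
  linarith [(smul_eq_zero.1 h).resolve_right hq]

theorem sigma_apply_eq_sigma_apply_of_bf_eq (Df : Decomp G f) (h : G.bf e f = 1 / 25) :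
    D.sigma f = Df.sigma e := by
  rw [D.sigma_apply_eq_add_sub_mul, Df.sigma_apply_eq_add_sub_mul, G.symm f e, G.comm f e, h]
  module

theorem sigma_apply_eq_self_or_eq_sigma_apply (Df : Decomp G f) :
    D.sigma f = f ∨ D.sigma f = Df.sigma e := by
  by_cases hq : D.piq f = 0
  · left
    rw [D.sigma_apply, hq, smul_zero, sub_zero]
  · exact Or.inr (D.sigma_apply_eq_sigma_apply_of_bf_eq Df (D.bf_eq_of_piq_ne_zero Df hq))

end pair

end Decomp

theorem stmt_4_general {B : Type*} [AddCommGroup B] [Module ℝ B] (G : GriessAlg B)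
    (E : Set B) (D : (e : B) → e ∈ E → Decomp G e)
    (hauto : ∀ (e : B) (he : e ∈ E) (x y : B),
      (D e he).sigma (G.mul x y) = G.mul ((D e he).sigma x) ((D e he).sigma y)) :
    ∀ (e : B) (he : e ∈ E) (f : B) (hf : f ∈ E),
      ((D e he).sigma ∘ₗ (D f hf).sigma) ∘ₗ ((D e he).sigma ∘ₗ (D f hf).sigma)
          = LinearMap.id ∨
      (((D e he).sigma ∘ₗ (D f hf).sigma) ∘ₗ ((D e he).sigma ∘ₗ (D f hf).sigma))
          ∘ₗ ((D e he).sigma ∘ₗ (D f hf).sigma) = LinearMap.id := by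
  intro e he f hf
  set s := (D e he).sigma
  set t := (D f hf).sigma
  have hs : G.IsSigma e s := (D e he).isSigma
  have ht : G.IsSigma f t := (D f hf).isSigma
  have hsts : G.IsSigma (s f) (s * t * s) := hs.mul_mul (hauto e he) ht
  rcases (D e he).sigma_apply_eq_self_or_eq_sigma_apply (D f hf) with hfix | hswap
  · rw [hfix] at hsts
    exact Or.inl (mul_mul_self_eq_one_of_mul_mul_eq ht.mul_self (hsts.unique ht))
  · have htst : G.IsSigma (s f) (t * s * t) := hswap ▸ ht.mul_mul (hauto f hf) hs
    exact Or.inr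
      (mul_mul_self_mul_eq_one_of_braid hs.mul_self ht.mul_self (hsts.unique htst))

/-- if every `e ∈ E` admits a `(2,0,2/5)`-decomposition and the
associated σ-involutions are form-preserving algebra automorphisms, then for
all `e, f ∈ E` the composite `σ_e ∘ σ_f` has order at most 3: either its
square or its cube is the identity.  Thus the σ-involutions generate a
3-transposition group. -/
theorem stmt_4 {B : Type*} [AddCommGroup B] [Module ℝ B] (G : GriessAlg B)
    (E : Set B) (D : (e : B) → e ∈ E → Decomp G e)
    (hauto : ∀ (e : B) (he : e ∈ E) (x y : B),
      (D e he).sigma (G.mul x y) = G.mul ((D e he).sigma x) ((D e he).sigma y))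
    (hform : ∀ (e : B) (he : e ∈ E) (x y : B),
      G.bf ((D e he).sigma x) ((D e he).sigma y) = G.bf x y) :
    ∀ (e : B) (he : e ∈ E) (f : B) (hf : f ∈ E),
      ((D e he).sigma ∘ₗ (D f hf).sigma) ∘ₗ ((D e he).sigma ∘ₗ (D f hf).sigma)
          = LinearMap.id ∨
      (((D e he).sigma ∘ₗ (D f hf).sigma) ∘ₗ ((D e he).sigma ∘ₗ (D f hf).sigma))
          ∘ₗ ((D e he).sigma ∘ₗ (D f hf).sigma) = LinearMap.id :=
  stmt_4_general G E D hauto
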